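/- arXiv:1609.07199 — 2 statements merged into one kernel-verified Lean document; each statement's English description precedes it below -/
import Mathlib

section
/- Let θ be a CPWL function and let x̄, v̄, Ψ, Λ(x̄) be as in the variational-system setting with v̄ ∈ Λ(x̄). Then v̄ is a critical multiplier if and only if there exists a pair (ξ,η) ∈ ℝ^n × ℝ^m with ξ ≠ 0 such that ∇ₓΨ(x̄,v̄)ξ + ∇Φ(x̄)*η = 0, ⟨η, ∇Φ(x̄)ξ⟩ = 0, ∇Φ(x̄)ξ ∈ 𝒦(z̄,v̄), and η ∈ 𝒦(z̄,v̄)*. -/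
open Filter Topology Set RealInnerProductSpace

noncomputable section

abbrev Ev (k : ℕ) := EuclideanSpace ℝ (Fin k)

/-- The Bouligand–Severi tangent cone to a set `s` at `x`. -/
def tcone {E : Type*} [NormedAddCommGroup E] [NormedSpace ℝ E] (s : Set E) (x : E) : Set E :=
  {w | ∃ (z : ℕ → E) (c : ℕ → ℝ), (∀ k, z k ∈ s) ∧ (∀ k, 0 ≤ c k) ∧
      Tendsto z atTop (𝓝 x) ∧ Tendsto (fun k => c k • (z k - x)) atTop (𝓝 w)}

/-- The data of a convex piecewise linear (CPWL) extended-real-valued function on `ℝ^m`: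
`θ(z) = max_i (⟨a i, z⟩ - al i)` on the polyhedron `dom θ = {z | ⟨d i, z⟩ ≤ be i ∀ i}`,
and `θ(z) = +∞` outside of it. -/
structure CPWL (m : ℕ) where
  l : ℕ
  p : ℕ
  hl : 0 < l
  a : Fin l → Ev m
  al : Fin l → ℝ
  d : Fin p → Ev m
  be : Fin p → ℝ
  dom_nonempty : ∃ z : Ev m, ∀ i, ⟪d i, z⟫ ≤ be i

namespace CPWL

variable {m : ℕ} (θ : CPWL m)

/-- The (polyhedral) domain of the CPWL function. -/
def dom : Set (Ev m) := {z | ∀ i, ⟪θ.d i, z⟫ ≤ θ.be i}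

/-- The real value `max_i (⟨a i, z⟩ - al i)` of the CPWL function (meaningful on its domain). -/
def val (z : Ev m) : ℝ := ⨆ i : Fin θ.l, (⟪θ.a i, z⟫ - θ.al i)

/-- The CPWL function as an extended-real-valued function. -/
def eval (z : Ev m) : EReal :=
  @ite _ (z ∈ θ.dom) (Classical.propDecidable _) ((θ.val z : ℝ) : EReal) ⊤

/-- The subdifferential (of convex analysis) of the CPWL function. -/
def subdiff (z : Ev m) : Set (Ev m) :=
  {v | z ∈ θ.dom ∧ ∀ z' ∈ θ.dom, ⟪v, z' - z⟫ ≤ θ.val z' - θ.val z}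

/-- Active indices `K(z)` of the max-representation. -/
def Kact (z : Ev m) : Set (Fin θ.l) := {i | θ.val z = ⟪θ.a i, z⟫ - θ.al i}

/-- Active indices `I(z)` of the domain constraints. -/
def Iact (z : Ev m) : Set (Fin θ.p) := {i | ⟪θ.d i, z⟫ = θ.be i}

/-- The critical cone `𝒦(z̄,v̄) = {w ∈ T(z̄; dom θ) : ⟨v̄,w⟩ = θ′(z̄;w)}`. -/
def crit (zb vb : Ev m) : Set (Ev m) :=
  {w | w ∈ tcone θ.dom zb ∧
    Tendsto (fun t : ℝ => (θ.val (zb + t • w) - θ.val zb) / t) (𝓝[>] (0 : ℝ))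
      (𝓝 ⟪vb, w⟫)}

/-- The graph of the subdifferential mapping. -/
def gph : Set (Ev m × Ev m) := {zv | zv.2 ∈ θ.subdiff zv.1}

/-- The graphical derivative `(D∂θ)(z̄,v̄)(u)`. -/
def Dsub (zb vb u : Ev m) : Set (Ev m) := {w | (u, w) ∈ tcone θ.gph (zb, vb)}

/-- The regular coderivative `(D̂*∂θ)(z̄,v̄)(u)`. -/
def Dhat (zb vb u : Ev m) : Set (Ev m) :=
  {w | ∀ h ∈ tcone θ.gph (zb, vb), ⟪w, h.1⟫ - ⟪u, h.2⟫ ≤ 0}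

end CPWL

section VarSys

variable {n m : ℕ}

/-- The adjoint `∇Φ(x)*` of the Jacobian of `Φ` at `x`. -/
def adjD (Φ : Ev n → Ev m) (x : Ev n) : Ev m →L[ℝ] Ev n :=
  ContinuousLinearMap.adjoint (fderiv ℝ Φ x)

/-- `Ψ(x,v) = f(x) + ∇Φ(x)* v`. -/
def Psi (f : Ev n → Ev n) (Φ : Ev n → Ev m) (x : Ev n) (v : Ev m) : Ev n :=
  f x + adjD Φ x v

/-- The partial Jacobian `∇ₓΨ(x̄,v̄)`. -/
def gradxPsi (f : Ev n → Ev n) (Φ : Ev n → Ev m) (xb : Ev n) (vb : Ev m) :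
    Ev n →L[ℝ] Ev n :=
  fderiv ℝ (fun x => Psi f Φ x vb) xb

/-- The Lagrange multiplier set `Λ(x̄)` of the variational system. -/
def Lam (f : Ev n → Ev n) (Φ : Ev n → Ev m) (θ : CPWL m) (xb : Ev n) : Set (Ev m) :=
  {v | Psi f Φ xb v = 0 ∧ v ∈ θ.subdiff (Φ xb)}

/-- `v̄` is a critical multiplier for the variational system. -/
def IsCritical (f : Ev n → Ev n) (Φ : Ev n → Ev m) (θ : CPWL m) (xb : Ev n) (vb : Ev m) :
    Prop :=
  ∃ ξ : Ev n, ξ ≠ 0 ∧ ∃ w ∈ θ.Dsub (Φ xb) vb (fderiv ℝ Φ xb ξ),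
    gradxPsi f Φ xb vb ξ + adjD Φ xb w = 0

/-- The solution map of the canonically perturbed variational system. -/
def Smap (f : Ev n → Ev n) (Φ : Ev n → Ev m) (θ : CPWL m) (p₁ : Ev n) (p₂ : Ev m) :
    Set (Ev n × Ev m) :=
  {xv | Psi f Φ xv.1 xv.2 = p₁ ∧ xv.2 ∈ θ.subdiff (Φ xv.1 + p₂)}

end VarSys

section General

variable {n m : ℕ}

/-- The subdifferential of a general extended-real-valued function. -/
def subdiffE (θ : Ev m → EReal) (z : Ev m) : Set (Ev m) :=
  {v | ∀ z', ((⟪v, z' - z⟫ : ℝ) : EReal) ≤ θ z' - θ z}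

/-- The graph of the subdifferential of a general extended-real-valued function. -/
def gphE (θ : Ev m → EReal) : Set (Ev m × Ev m) := {zv | zv.2 ∈ subdiffE θ zv.1}

/-- The graphical derivative of the subdifferential, general case. -/
def DsubE (θ : Ev m → EReal) (zb vb u : Ev m) : Set (Ev m) :=
  {w | (u, w) ∈ tcone (gphE θ) (zb, vb)}

/-- The Lagrange multiplier set, general case. -/
def LamE (f : Ev n → Ev n) (Φ : Ev n → Ev m) (θ : Ev m → EReal) (xb : Ev n) :
    Set (Ev m) :=
  {v | Psi f Φ xb v = 0 ∧ v ∈ subdiffE θ (Φ xb)}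

/-- The solution map of the canonically perturbed variational system, general case. -/
def SmapE (f : Ev n → Ev n) (Φ : Ev n → Ev m) (θ : Ev m → EReal) (p₁ : Ev n)
    (p₂ : Ev m) : Set (Ev n × Ev m) :=
  {xv | Psi f Φ xv.1 xv.2 = p₁ ∧ xv.2 ∈ subdiffE θ (Φ xv.1 + p₂)}

end General

section Composite

variable {n m : ℕ}

/-- The gradient `∇ₓL(·,v)` of the Lagrangian `L(x,v) = φ₀(x) + ⟨Φ(x),v⟩`. -/
def gradL (φ₀ : Ev n → ℝ) (Φ : Ev n → Ev m) (v : Ev m) (x : Ev n) : Ev n :=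
  gradient (fun y => φ₀ y + ⟪Φ y, v⟫) x

/-- The Hessian `∇²ₓₓL(x̄,v)` as a linear operator. -/
def HessOp (φ₀ : Ev n → ℝ) (Φ : Ev n → Ev m) (v : Ev m) (xb : Ev n) : Ev n →L[ℝ] Ev n :=
  fderiv ℝ (gradL φ₀ Φ v) xb

/-- The Lagrange multiplier set `Λ_com(x̄)` of the composite optimization problem. -/
def LamCom (φ₀ : Ev n → ℝ) (Φ : Ev n → Ev m) (θ : CPWL m) (xb : Ev n) : Set (Ev m) :=
  {v | gradient φ₀ xb + adjD Φ xb v = 0 ∧ v ∈ θ.subdiff (Φ xb)}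

/-- Criticality of a multiplier in the composite optimization setting. -/
def IsCriticalCom (φ₀ : Ev n → ℝ) (Φ : Ev n → Ev m) (θ : CPWL m) (xb : Ev n) (v : Ev m) :
    Prop :=
  ∃ ξ : Ev n, ξ ≠ 0 ∧ ∃ w ∈ θ.Dsub (Φ xb) v (fderiv ℝ Φ xb ξ),
    HessOp φ₀ Φ v xb ξ + adjD Φ xb w = 0

/-- The solution map of the canonically perturbed KKT system of composite optimization. -/
def SKKT (φ₀ : Ev n → ℝ) (Φ : Ev n → Ev m) (θ : CPWL m) (p₁ : Ev n) (p₂ : Ev m) :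
    Set (Ev n × Ev m) :=
  {xv | gradient φ₀ xv.1 + adjD Φ xv.1 xv.2 = p₁ ∧ xv.2 ∈ θ.subdiff (Φ xv.1 + p₂)}

/-- `x̄` is a local minimizer of `φ₀ + θ∘Φ`. -/
def LocalMin (φ₀ : Ev n → ℝ) (Φ : Ev n → Ev m) (θ : CPWL m) (xb : Ev n) : Prop :=
  ∃ U ∈ 𝓝 xb, ∀ x ∈ U,
    ((φ₀ xb : ℝ) : EReal) + θ.eval (Φ xb) ≤ ((φ₀ x : ℝ) : EReal) + θ.eval (Φ x)

end Composite

section Calmness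

variable {n m : ℕ}

/-- Isolated calmness of a solution map at `((0,0), q0)`. -/
def IsolCalm (S : Ev n × Ev m → Set (Ev n × Ev m)) (q0 : Ev n × Ev m) : Prop :=
  ∃ c : ℝ, 0 ≤ c ∧ ∃ U ∈ 𝓝 (0 : Ev n × Ev m), ∃ V ∈ 𝓝 q0,
    ∀ p ∈ U, ∀ q ∈ S p ∩ V, ‖q - q0‖ ≤ c * (‖p.1‖ + ‖p.2‖)

/-- Robust isolated calmness of a solution map at `((0,0), q0)`. -/
def RobustIsolCalm (S : Ev n × Ev m → Set (Ev n × Ev m)) (q0 : Ev n × Ev m) : Prop :=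
  ∃ c : ℝ, 0 ≤ c ∧ ∃ U ∈ 𝓝 (0 : Ev n × Ev m), ∃ V ∈ 𝓝 q0,
    (∀ p ∈ U, ∀ q ∈ S p ∩ V, ‖q - q0‖ ≤ c * (‖p.1‖ + ‖p.2‖)) ∧
    (∀ p ∈ U, (S p ∩ V).Nonempty)

/-- The Lipschitz-like (Aubin) property of a solution map around `((0,0), q0)`. -/
def LipschitzLike (S : Ev n × Ev m → Set (Ev n × Ev m)) (q0 : Ev n × Ev m) : Prop :=
  ∃ c : ℝ, 0 ≤ c ∧ ∃ U ∈ 𝓝 (0 : Ev n × Ev m), ∃ V ∈ 𝓝 q0,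
    ∀ p ∈ U, ∀ p' ∈ U, ∀ q ∈ S p ∩ V, ∃ q' ∈ S p', ‖q - q'‖ ≤ c * ‖p - p'‖

end Calmness

/-!
Near `z̄` a CPWL function coincides with its first-order model: for `w` in the linearized
tangent cone `T` of `dom θ` and small `t > 0`, `z̄ + t w ∈ dom θ` and
`θ (z̄ + t w) = θ z̄ + t θ′(z̄; w)` with `θ′(z̄; w) = max_{i ∈ K(z̄)} ⟨a i, w⟩`. So the critical
cone is `{w ∈ T | ⟨v̄, w⟩ = θ′(z̄; w)}`, and the theorem reduces to the description
`w ∈ D∂θ(z̄, v̄)(u) ↔ u ∈ 𝒦, w ∈ 𝒦*, ⟨w, u⟩ = 0`. For `→`, pass to the limit in the subgradient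
inequalities along a tangent sequence of `gph ∂θ`. For `←`, Farkas' lemma bounds
`⟨w, z - z̄⟩` by a multiple of `θ z - θ z̄ - ⟨v̄, z - z̄⟩` on `dom θ`, which together with
`⟨w, u⟩ = 0` gives `v̄ + t w ∈ ∂θ(z̄ + t u)` for all small `t > 0`.
-/

def conicHull {ι E : Type*} [Fintype ι] [AddCommMonoid E] [Module ℝ E] (c : ι → E) : Set E :=
  {x | ∃ s : ι → ℝ, 0 ≤ s ∧ ∑ k, s k • c k = x}

section ConicHull

variable {ι E : Type*} [Fintype ι] [NormedAddCommGroup E] [NormedSpace ℝ E]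

lemma conicHull_eq_image (c : ι → E) :
    conicHull c = Fintype.linearCombination ℝ c '' Ici 0 := by
  ext x
  simp [conicHull, Fintype.linearCombination_apply]

lemma conicHull_comp_equiv {κ : Type*} [Fintype κ] (c : ι → E) (e : κ ≃ ι) :
    conicHull (c ∘ e) = conicHull c := by
  ext x
  constructor
  · rintro ⟨s, hs, rfl⟩
    exact ⟨s ∘ e.symm, fun k => hs _, by rw [← e.sum_comp]; simp⟩
  · rintro ⟨s, hs, rfl⟩
    exact ⟨s ∘ e, fun k => hs _, e.sum_comp fun k => s k • c k⟩

lemma zero_mem_conicHull (c : ι → E) : (0 : E) ∈ conicHull c :=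
  ⟨0, le_rfl, by simp⟩

lemma mem_conicHull_self (c : ι → E) (k : ι) : c k ∈ conicHull c := by
  classical
  exact ⟨Pi.single k 1, Pi.single_nonneg.2 zero_le_one, by simp [Pi.single_apply]⟩

lemma smul_mem_conicHull {c : ι → E} {x : E} (hx : x ∈ conicHull c) {t : ℝ} (ht : 0 ≤ t) :
    t • x ∈ conicHull c := by
  obtain ⟨s, hs, rfl⟩ := hx
  exact ⟨t • s, smul_nonneg ht hs, by simp [Finset.smul_sum, mul_smul]⟩

lemma convex_conicHull (c : ι → E) : Convex ℝ (conicHull c) := by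
  rintro _ ⟨s, hs, rfl⟩ _ ⟨r, hr, rfl⟩ a b ha hb -
  exact ⟨a • s + b • r, add_nonneg (smul_nonneg ha hs) (smul_nonneg hb hr), by
    simp [add_smul, mul_smul, Finset.sum_add_distrib, Finset.smul_sum]⟩

lemma conicHull_comp_succAbove_subset {N : ℕ} (c : Fin (N + 1) → E) (k : Fin (N + 1)) :
    conicHull (c ∘ k.succAbove) ⊆ conicHull c := by
  rintro _ ⟨s, hs, rfl⟩
  refine ⟨k.insertNth 0 s, fun j => ?_, ?_⟩
  · induction j using k.succAboveCases with
    | x => simp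
    | p j => simpa using hs j
  · simp [Fin.sum_univ_succAbove _ k]

lemma isClosed_conicHull_of_linearIndependent {c : ι → E} (hc : LinearIndependent ℝ c) :
    IsClosed (conicHull c) := by
  rw [conicHull_eq_image]
  exact (LinearMap.isClosedEmbedding_of_injective
    (LinearMap.ker_eq_bot.2 hc.fintypeLinearCombination_injective)).isClosedMap _ isClosed_Ici

/-- Carathéodory's reduction step: along a linear dependence, push the coefficients
down until one of them vanishes. -/
lemma exists_mem_conicHull_comp_succAbove {N : ℕ} {c : Fin (N + 1) → E}
    (hc : ¬ LinearIndependent ℝ c) {x : E} (hx : x ∈ conicHull c) :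
    ∃ k : Fin (N + 1), x ∈ conicHull (c ∘ k.succAbove) := by
  classical
  obtain ⟨s, hs, rfl⟩ := hx
  obtain ⟨g, hg, i₀, hgi₀⟩ : ∃ g : Fin (N + 1) → ℝ, ∑ k, g k • c k = 0 ∧ ∃ i₀, 0 < g i₀ := by
    obtain ⟨g, hg, i₀, hgi₀⟩ := Fintype.not_linearIndependent_iff.1 hc
    rcases hgi₀.lt_or_gt with h | h
    · exact ⟨-g, by simpa using hg, i₀, by simpa using h⟩
    · exact ⟨g, hg, i₀, h⟩
  let P := Finset.univ.filter fun k => 0 < g k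
  obtain ⟨k₀, hk₀P, hk₀min⟩ := P.exists_min_image (fun k => s k / g k) ⟨i₀, by simp [P, hgi₀]⟩
  have hgk₀ : 0 < g k₀ := (Finset.mem_filter.1 hk₀P).2
  set r := s k₀ / g k₀
  have hr : 0 ≤ r := div_nonneg (hs k₀) hgk₀.le
  have hs' : 0 ≤ s - r • g := fun k => by
    show 0 ≤ s k - r * g k
    by_cases hgk : 0 < g k
    · have := hk₀min k (by simp [P, hgk])
      rw [le_div_iff₀ hgk] at this
      linarith
    · have hsk : 0 ≤ s k := hs k
      nlinarith [mul_nonpos_of_nonneg_of_nonpos hr (not_lt.1 hgk)]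
  have hsum : ∑ k, (s - r • g) k • c k = ∑ k, s k • c k := by
    simp [sub_smul, Finset.sum_sub_distrib, mul_smul, ← Finset.smul_sum, hg]
  refine ⟨k₀, fun j => (s - r • g) (k₀.succAbove j), fun j => hs' _, ?_⟩
  rw [← hsum, Fin.sum_univ_succAbove _ k₀]
  simp [r, div_mul_cancel₀ _ hgk₀.ne']

lemma isClosed_conicHull_fin {N : ℕ} (c : Fin N → E) : IsClosed (conicHull c) := by
  induction N with
  | zero => simp [conicHull, eq_comm]
  | succ N ih =>
    by_cases hc : LinearIndependent ℝ c
    · exact isClosed_conicHull_of_linearIndependent hc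
    · have : conicHull c = ⋃ k : Fin (N + 1), conicHull (c ∘ k.succAbove) :=
        (Set.iUnion_subset (conicHull_comp_succAbove_subset c)).antisymm' fun x hx =>
          Set.mem_iUnion.2 (exists_mem_conicHull_comp_succAbove hc hx)
      rw [this]
      exact isClosed_iUnion_of_finite fun k => ih _

lemma isClosed_conicHull (c : ι → E) : IsClosed (conicHull c) := by
  rw [← conicHull_comp_equiv c (Fintype.equivFin ι).symm]
  exact isClosed_conicHull_fin _

end ConicHull

/-- Farkas' lemma. -/
lemma mem_conicHull_of_forall_inner_nonpos {ι E : Type*} [Fintype ι] [NormedAddCommGroup E]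
    [InnerProductSpace ℝ E] [CompleteSpace E] {c : ι → E} {w : E}
    (h : ∀ y, (∀ k, ⟪c k, y⟫ ≤ 0) → ⟪w, y⟫ ≤ 0) : w ∈ conicHull c := by
  by_contra hw
  obtain ⟨f, u, hfc, hfw⟩ :=
    geometric_hahn_banach_closed_point (convex_conicHull c) (isClosed_conicHull c) hw
  have hf_nonpos : ∀ x ∈ conicHull c, f x ≤ 0 := fun x hx => by
    by_contra! hpos
    have := hfc ((u / f x) • x) (smul_mem_conicHull hx (div_nonneg
      (by simpa using (hfc 0 (zero_mem_conicHull c)).le) hpos.le))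
    rw [map_smul, smul_eq_mul, div_mul_cancel₀ _ hpos.ne'] at this
    exact lt_irrefl u this
  set y := (InnerProductSpace.toDual ℝ E).symm f
  have hy : ∀ x, ⟪x, y⟫ = f x := fun x => by
    rw [real_inner_comm]; exact InnerProductSpace.toDual_symm_apply
  have := h y fun k => (hy _).trans_le (hf_nonpos _ (mem_conicHull_self c k))
  rw [hy] at this
  linarith [map_zero f ▸ hfc 0 (zero_mem_conicHull c)]

section TangentCone

variable {E F : Type*} [NormedAddCommGroup E] [NormedSpace ℝ E]

lemma mem_tcone_of_eventually {s : Set E} {x w : E}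
    (h : ∀ᶠ t in 𝓝[>] (0 : ℝ), x + t • w ∈ s) : w ∈ tcone s x := by
  obtain ⟨t₁, ht₁, hsub⟩ := mem_nhdsGT_iff_exists_Ioc_subset.1 h
  have ht₁ : 0 < t₁ := ht₁
  refine ⟨fun k => x + (t₁ / (k + 1)) • w, fun k => (k + 1) / t₁,
    fun k => hsub ⟨by positivity, div_le_self ht₁.le (by simp)⟩, fun k => by positivity, ?_, ?_⟩
  · have : Tendsto (fun k : ℕ => t₁ / (k + 1)) atTop (𝓝 0) := by
      simpa [div_eq_mul_inv] using tendsto_one_div_add_atTop_nhds_zero_nat.const_mul t₁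
    simpa using (this.smul_const w).const_add x
  · refine tendsto_const_nhds.congr fun k => ?_
    have hk : ((k : ℝ) + 1) / t₁ * (t₁ / (k + 1)) = 1 := by field_simp
    rw [add_sub_cancel_left, smul_smul, hk, one_smul]

lemma exists_seq_of_mem_tcone_prod [NormedAddCommGroup F] [NormedSpace ℝ F]
    {S : Set (E × F)} {x u : E} {y w : F} (h : (u, w) ∈ tcone S (x, y)) :
    ∃ (z : ℕ → E) (v : ℕ → F) (c : ℕ → ℝ), (∀ k, (z k, v k) ∈ S) ∧ (∀ k, 0 ≤ c k) ∧
      Tendsto z atTop (𝓝 x) ∧ Tendsto v atTop (𝓝 y) ∧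
      Tendsto (fun k => c k • (z k - x)) atTop (𝓝 u) ∧
      Tendsto (fun k => c k • (v k - y)) atTop (𝓝 w) := by
  obtain ⟨p, c, hp, hc, hlim, hdir⟩ := h
  exact ⟨fun k => (p k).1, fun k => (p k).2, c, hp, hc,
    (continuous_fst.tendsto _).comp hlim, (continuous_snd.tendsto _).comp hlim,
    by simpa [Function.comp_def] using (continuous_fst.tendsto _).comp hdir,
    by simpa [Function.comp_def] using (continuous_snd.tendsto _).comp hdir⟩

end TangentCone

lemma eventually_add_mul_nonpos {a b : ℝ} (ha : a ≤ 0) (hb : a = 0 → b ≤ 0) :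
    ∀ᶠ t in 𝓝[>] (0 : ℝ), a + t * b ≤ 0 := by
  rcases ha.lt_or_eq with ha | rfl
  · have : Tendsto (fun t : ℝ => a + t * b) (𝓝[>] 0) (𝓝 (a + 0 * b)) :=
      ((Continuous.tendsto (by fun_prop) 0).mono_left nhdsWithin_le_nhds)
    exact (this.eventually (gt_mem_nhds (by simpa using ha))).mono fun _ => le_of_lt
  · filter_upwards [self_mem_nhdsWithin] with t ht
    nlinarith [hb rfl, ht.out]

namespace CPWL

variable {m : ℕ} (θ : CPWL m)

instance : Nonempty (Fin θ.l) := ⟨⟨0, θ.hl⟩⟩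

lemma le_val (z : Ev m) (i : Fin θ.l) : ⟪θ.a i, z⟫ - θ.al i ≤ θ.val z :=
  le_ciSup (f := fun i => ⟪θ.a i, z⟫ - θ.al i) (Set.finite_range _).bddAbove i

instance (z : Ev m) : Nonempty (θ.Kact z) := by
  obtain ⟨i, hi⟩ := Finite.exists_max fun i : Fin θ.l => ⟪θ.a i, z⟫ - θ.al i
  exact ⟨⟨i, le_antisymm (ciSup_le hi) (θ.le_val z i)⟩⟩

lemma inner_sub_le_val_sub {zb : Ev m} {i : Fin θ.l} (hi : i ∈ θ.Kact zb) (z : Ev m) :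
    ⟪θ.a i, z - zb⟫ ≤ θ.val z - θ.val zb := by
  have hi : θ.val zb = ⟪θ.a i, zb⟫ - θ.al i := hi
  rw [inner_sub_right]
  linarith [θ.le_val z i]

lemma inner_sub_le_of_mem_subdiff {z v : Ev m} (hv : v ∈ θ.subdiff z) {z' : Ev m}
    (hz' : z' ∈ θ.dom) : ⟪v, z'⟫ - ⟪v, z⟫ ≤ θ.val z' - θ.val z := by
  simpa [inner_sub_right] using hv.2 z' hz'

lemma inner_sub_nonneg_of_mem_subdiff {z z' v v' : Ev m} (hv : v ∈ θ.subdiff z)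
    (hv' : v' ∈ θ.subdiff z') : 0 ≤ ⟪v' - v, z' - z⟫ := by
  have h := θ.inner_sub_le_of_mem_subdiff hv hv'.1
  have h' := θ.inner_sub_le_of_mem_subdiff hv' hv.1
  simp only [inner_sub_left, inner_sub_right] at h h' ⊢
  linarith

/-- The directional derivative `θ′(z̄; w)`, see `CPWL.tendsto_dirDeriv`. -/
def dirDeriv (zb w : Ev m) : ℝ := ⨆ i : θ.Kact zb, ⟪θ.a i, w⟫

lemma le_dirDeriv {zb : Ev m} {i : Fin θ.l} (hi : i ∈ θ.Kact zb) (w : Ev m) :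
    ⟪θ.a i, w⟫ ≤ θ.dirDeriv zb w :=
  le_ciSup (f := fun i : θ.Kact zb => ⟪θ.a i, w⟫) (Set.finite_range _).bddAbove ⟨i, hi⟩

lemma dirDeriv_le {zb w : Ev m} {r : ℝ} (h : ∀ i ∈ θ.Kact zb, ⟪θ.a i, w⟫ ≤ r) :
    θ.dirDeriv zb w ≤ r :=
  ciSup_le fun i => h i i.2

lemma exists_dirDeriv_eq (zb w : Ev m) : ∃ i ∈ θ.Kact zb, θ.dirDeriv zb w = ⟪θ.a i, w⟫ := by
  obtain ⟨i, hi⟩ := Finite.exists_max fun i : θ.Kact zb => ⟪θ.a i, w⟫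
  exact ⟨i, i.2, le_antisymm (ciSup_le hi) (θ.le_dirDeriv i.2 w)⟩

def domTangent (zb : Ev m) : Set (Ev m) := {w | ∀ j ∈ θ.Iact zb, ⟪θ.d j, w⟫ ≤ 0}

lemma eventually_mem_dom {zb w : Ev m} (hzb : zb ∈ θ.dom) (hw : w ∈ θ.domTangent zb) :
    ∀ᶠ t in 𝓝[>] (0 : ℝ), zb + t • w ∈ θ.dom := by
  refine eventually_all.2 fun j => ?_
  have hzj : ⟪θ.d j, zb⟫ ≤ θ.be j := hzb j
  filter_upwards [eventually_add_mul_nonpos (a := ⟪θ.d j, zb⟫ - θ.be j) (b := ⟪θ.d j, w⟫)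
    (by linarith) fun h => hw j (by simp only [Iact, mem_ofPred_eq]; linarith)] with t ht
  rw [inner_add_right, real_inner_smul_right]
  linarith

lemma eventually_val_add_smul (zb w : Ev m) :
    ∀ᶠ t in 𝓝[>] (0 : ℝ), θ.val (zb + t • w) = θ.val zb + t * θ.dirDeriv zb w := by
  have hle : ∀ᶠ t in 𝓝[>] (0 : ℝ),
      ∀ i, ⟪θ.a i, zb + t • w⟫ - θ.al i ≤ θ.val zb + t * θ.dirDeriv zb w := by
    refine eventually_all.2 fun i => ?_
    filter_upwards [eventually_add_mul_nonpos
      (a := ⟪θ.a i, zb⟫ - θ.al i - θ.val zb) (b := ⟪θ.a i, w⟫ - θ.dirDeriv zb w)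
      (by linarith [θ.le_val zb i])
      fun h => by linarith [θ.le_dirDeriv (show θ.val zb = _ by linarith) w]] with t ht
    rw [inner_add_right, real_inner_smul_right]
    linarith
  filter_upwards [hle] with t ht
  obtain ⟨i, hi, hiw⟩ := θ.exists_dirDeriv_eq zb w
  have hi : θ.val zb = ⟪θ.a i, zb⟫ - θ.al i := hi
  refine le_antisymm (ciSup_le ht) ?_
  have := θ.le_val (zb + t • w) i
  rw [inner_add_right, real_inner_smul_right] at this
  rw [hi, hiw]
  linarith

lemma tcone_dom_subset_domTangent (zb : Ev m) : tcone θ.dom zb ⊆ θ.domTangent zb := by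
  rintro u ⟨z, c, hz, hc, -, hlim⟩ j (hj : ⟪θ.d j, zb⟫ = θ.be j)
  refine le_of_tendsto (tendsto_const_nhds.inner hlim) (Eventually.of_forall fun k => ?_)
  rw [real_inner_smul_right, inner_sub_right, hj]
  exact mul_nonpos_of_nonneg_of_nonpos (hc k) (by linarith [hz k j])

lemma mem_tcone_dom_iff {zb w : Ev m} (hzb : zb ∈ θ.dom) :
    w ∈ tcone θ.dom zb ↔ w ∈ θ.domTangent zb :=
  ⟨fun h => θ.tcone_dom_subset_domTangent zb h,
    fun h => mem_tcone_of_eventually (θ.eventually_mem_dom hzb h)⟩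

lemma tendsto_dirDeriv (zb w : Ev m) :
    Tendsto (fun t : ℝ => (θ.val (zb + t • w) - θ.val zb) / t) (𝓝[>] 0)
      (𝓝 (θ.dirDeriv zb w)) := by
  refine tendsto_const_nhds.congr' ?_
  filter_upwards [θ.eventually_val_add_smul zb w, self_mem_nhdsWithin] with t ht htpos
  rw [ht, add_sub_cancel_left, mul_div_cancel_left₀ _ (ne_of_gt htpos)]

lemma mem_crit_iff {zb vb w : Ev m} (hzb : zb ∈ θ.dom) :
    w ∈ θ.crit zb vb ↔ w ∈ θ.domTangent zb ∧ ⟪vb, w⟫ = θ.dirDeriv zb w := by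
  rw [crit, mem_ofPred_eq, θ.mem_tcone_dom_iff hzb]
  refine and_congr_right fun _ => ⟨fun h => tendsto_nhds_unique h (θ.tendsto_dirDeriv zb w),
    fun h => ?_⟩
  rw [h]
  exact θ.tendsto_dirDeriv zb w

lemma inner_le_dirDeriv {zb vb w : Ev m} (hv : vb ∈ θ.subdiff zb) (hw : w ∈ θ.domTangent zb) :
    ⟪vb, w⟫ ≤ θ.dirDeriv zb w := by
  obtain ⟨t, ⟨hdom, hval⟩, ht⟩ :=
    (((θ.eventually_mem_dom hv.1 hw).and (θ.eventually_val_add_smul zb w)).and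
      self_mem_nhdsWithin).exists
  have h := θ.inner_sub_le_of_mem_subdiff hv hdom
  rw [inner_add_right, real_inner_smul_right, hval] at h
  exact le_of_mul_le_mul_left (by linarith) (show (0 : ℝ) < t from ht)

end CPWL

namespace CPWL

variable {m : ℕ} (θ : CPWL m) {zb vb u w : Ev m}

lemma mem_tcone_dom_of_mem_Dsub (h : w ∈ θ.Dsub zb vb u) : u ∈ tcone θ.dom zb := by
  obtain ⟨z, v, c, hzv, hc, hz, -, hu, -⟩ := exists_seq_of_mem_tcone_prod h
  exact ⟨z, c, fun k => (hzv k : v k ∈ θ.subdiff (z k)).1, hc, hz, hu⟩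

lemma dirDeriv_le_inner_of_mem_Dsub (hv : vb ∈ θ.subdiff zb) (h : w ∈ θ.Dsub zb vb u) :
    θ.dirDeriv zb u ≤ ⟪vb, u⟫ := by
  obtain ⟨z, v, c, hzv, hc, -, hvlim, hu, -⟩ := exists_seq_of_mem_tcone_prod h
  refine θ.dirDeriv_le fun i hi => le_of_tendsto_of_tendsto' (tendsto_const_nhds.inner hu)
    (hvlim.inner hu) fun k => ?_
  rw [real_inner_smul_right, real_inner_smul_right, inner_sub_right (v k)]
  refine mul_le_mul_of_nonneg_left ?_ (hc k)
  linarith [θ.inner_sub_le_val_sub hi (z k), θ.inner_sub_le_of_mem_subdiff (hzv k) hv.1]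

lemma mem_crit_of_mem_Dsub (hv : vb ∈ θ.subdiff zb) (h : w ∈ θ.Dsub zb vb u) :
    u ∈ θ.crit zb vb := by
  have hu := (θ.mem_tcone_dom_iff hv.1).1 (θ.mem_tcone_dom_of_mem_Dsub h)
  exact (θ.mem_crit_iff hv.1).2
    ⟨hu, le_antisymm (θ.inner_le_dirDeriv hv hu) (θ.dirDeriv_le_inner_of_mem_Dsub hv h)⟩

lemma inner_nonpos_of_mem_Dsub (hv : vb ∈ θ.subdiff zb) (h : w ∈ θ.Dsub zb vb u) {y : Ev m}
    (hy : y ∈ θ.crit zb vb) : ⟪w, y⟫ ≤ 0 := by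
  rw [θ.mem_crit_iff hv.1] at hy
  obtain ⟨τ, ⟨hdom, hval⟩, hτ⟩ := (((θ.eventually_mem_dom hv.1 hy.1).and
    (θ.eventually_val_add_smul zb y)).and self_mem_nhdsWithin).exists
  obtain ⟨z, v, c, hzv, hc, hz, -, -, hw⟩ := exists_seq_of_mem_tcone_prod h
  have key : ∀ k, τ * ⟪c k • (v k - vb), y⟫ ≤ ⟪c k • (v k - vb), z k - zb⟫ := fun k => by
    -- add the subgradient inequalities of `v k` at `zb + τ • y` and of `vb` at `z k`
    have h₁ := θ.inner_sub_le_of_mem_subdiff (hzv k) hdom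
    have h₂ := θ.inner_sub_le_of_mem_subdiff hv (hzv k : v k ∈ θ.subdiff (z k)).1
    rw [hval, ← hy.2, inner_add_right, real_inner_smul_right] at h₁
    have base : τ * ⟪v k - vb, y⟫ ≤ ⟪v k - vb, z k - zb⟫ := by
      simp only [inner_sub_left, inner_sub_right]
      linarith
    rw [real_inner_smul_left, real_inner_smul_left, mul_left_comm]
    exact mul_le_mul_of_nonneg_left base (hc k)
  have hlim := le_of_tendsto_of_tendsto' ((hw.inner tendsto_const_nhds).const_mul τ)
    (hw.inner (by simpa using hz.sub_const zb)) key
  rw [inner_zero_right] at hlim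
  exact le_of_mul_le_mul_left (by simpa using hlim) hτ

lemma inner_eq_zero_of_mem_Dsub (hv : vb ∈ θ.subdiff zb) (h : w ∈ θ.Dsub zb vb u) :
    ⟪w, u⟫ = 0 := by
  refine le_antisymm (θ.inner_nonpos_of_mem_Dsub hv h (θ.mem_crit_of_mem_Dsub hv h)) ?_
  obtain ⟨z, v, c, hzv, hc, -, -, hu, hw⟩ := exists_seq_of_mem_tcone_prod h
  refine ge_of_tendsto' (hw.inner hu) fun k => ?_
  rw [real_inner_smul_left, real_inner_smul_right]
  exact mul_nonneg (hc k) (mul_nonneg (hc k) (θ.inner_sub_nonneg_of_mem_subdiff hv (hzv k)))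

/-- By Farkas' lemma `w` is a conic combination of the `d j`, `j ∈ I(z̄)`, and the `a i - v̄`,
`i ∈ K(z̄)`, each of which is dominated on `dom θ` by the gap `θ z - θ z̄ - ⟨v̄, z - z̄⟩`
(or by `0`). -/
lemma exists_inner_le_mul_gap (hv : vb ∈ θ.subdiff zb)
    (hw : ∀ y ∈ θ.crit zb vb, ⟪w, y⟫ ≤ 0) :
    ∃ S : ℝ, 0 ≤ S ∧ ∀ z ∈ θ.dom,
      ⟪w, z - zb⟫ ≤ S * (θ.val z - θ.val zb - ⟪vb, z - zb⟫) := by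
  classical
  let gen : θ.Iact zb ⊕ θ.Kact zb → Ev m := Sum.elim (fun j => θ.d j) (fun i => θ.a i - vb)
  obtain ⟨s, hs, rfl⟩ : w ∈ conicHull gen := by
    refine mem_conicHull_of_forall_inner_nonpos fun y hy => hw y ((θ.mem_crit_iff hv.1).2
      ⟨fun j hj => hy (.inl ⟨j, hj⟩), le_antisymm (θ.inner_le_dirDeriv hv fun j hj =>
        hy (.inl ⟨j, hj⟩)) (θ.dirDeriv_le fun i hi => ?_)⟩)
    have := hy (.inr ⟨i, hi⟩)
    simp only [gen, Sum.elim_inr, inner_sub_left] at this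
    linarith
  refine ⟨∑ i, s (.inr i), Finset.sum_nonneg fun i _ => hs _, fun z hz => ?_⟩
  have hd : ∀ j : θ.Iact zb, ⟪θ.d j, z - zb⟫ ≤ 0 := fun ⟨j, (hj : _ = _)⟩ => by
    rw [inner_sub_right, hj]
    linarith [hz j]
  have ha : ∀ i : θ.Kact zb,
      ⟪θ.a i - vb, z - zb⟫ ≤ θ.val z - θ.val zb - ⟪vb, z - zb⟫ := fun i => by
    rw [inner_sub_left]
    linarith [θ.inner_sub_le_val_sub i.2 z]
  calc ⟪∑ k, s k • gen k, z - zb⟫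
      = ∑ j, s (.inl j) * ⟪θ.d j, z - zb⟫ + ∑ i, s (.inr i) * ⟪θ.a i - vb, z - zb⟫ := by
        simp only [Fintype.sum_sum_type, inner_add_left, sum_inner, real_inner_smul_left, gen,
          Sum.elim_inl, Sum.elim_inr]
    _ ≤ 0 + ∑ i, s (.inr i) * (θ.val z - θ.val zb - ⟪vb, z - zb⟫) :=
        add_le_add (Finset.sum_nonpos fun j _ => mul_nonpos_of_nonneg_of_nonpos (hs _) (hd j))
          (Finset.sum_le_sum fun i _ => mul_le_mul_of_nonneg_left (ha i) (hs _))
    _ = _ := by rw [zero_add, Finset.sum_mul]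

lemma mem_Dsub_of_mem_crit (hv : vb ∈ θ.subdiff zb) (hu : u ∈ θ.crit zb vb)
    (hw : ∀ y ∈ θ.crit zb vb, ⟪w, y⟫ ≤ 0) (hwu : ⟪w, u⟫ = 0) : w ∈ θ.Dsub zb vb u := by
  obtain ⟨S, hS, hbound⟩ := θ.exists_inner_le_mul_gap hv hw
  rw [θ.mem_crit_iff hv.1] at hu
  have hsmall : ∀ᶠ t in 𝓝[>] (0 : ℝ), t * S ≤ 1 := by
    have : Tendsto (fun t : ℝ => t * S) (𝓝[>] 0) (𝓝 (0 * S)) :=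
      (Continuous.tendsto (by fun_prop) 0).mono_left nhdsWithin_le_nhds
    exact (this.eventually (gt_mem_nhds (by simp))).mono fun _ => le_of_lt
  refine mem_tcone_of_eventually ?_
  filter_upwards [θ.eventually_mem_dom hv.1 hu.1, θ.eventually_val_add_smul zb u, hsmall,
    self_mem_nhdsWithin] with t hdom hval htS (ht : 0 < t)
  refine ⟨hdom, fun z hz => ?_⟩
  have hgap : 0 ≤ θ.val z - θ.val zb - ⟪vb, z - zb⟫ := by linarith [hv.2 z hz]
  have hwz : t * ⟪w, z - zb⟫ ≤ θ.val z - θ.val zb - ⟪vb, z - zb⟫ := by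
    nlinarith [mul_le_mul_of_nonneg_left (hbound z hz) ht.le]
  change ⟪vb + t • w, z - (zb + t • u)⟫ ≤ θ.val z - θ.val (zb + t • u)
  rw [hval, ← hu.2, sub_add_eq_sub_sub, inner_sub_right _ (z - zb)]
  simp only [inner_add_left, real_inner_smul_left, real_inner_smul_right, hwu]
  linarith

lemma mem_Dsub_iff (hv : vb ∈ θ.subdiff zb) :
    w ∈ θ.Dsub zb vb u ↔
      u ∈ θ.crit zb vb ∧ ⟪w, u⟫ = 0 ∧ ∀ y ∈ θ.crit zb vb, ⟪w, y⟫ ≤ 0 :=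
  ⟨fun h => ⟨θ.mem_crit_of_mem_Dsub hv h, θ.inner_eq_zero_of_mem_Dsub hv h,
      fun _ => θ.inner_nonpos_of_mem_Dsub hv h⟩,
    fun ⟨hu, hwu, hw⟩ => θ.mem_Dsub_of_mem_crit hv hu hw hwu⟩

end CPWL

theorem stmt2_general {n m : ℕ} (θ : CPWL m) (f : Ev n → Ev n) (Φ : Ev n → Ev m)
    (xb : Ev n) (vb : Ev m)
    (hvb : vb ∈ Lam f Φ θ xb) :
    IsCritical f Φ θ xb vb ↔
      ∃ (ξ : Ev n) (η : Ev m), ξ ≠ 0 ∧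
        gradxPsi f Φ xb vb ξ + adjD Φ xb η = 0 ∧
        ⟪η, fderiv ℝ Φ xb ξ⟫ = 0 ∧
        fderiv ℝ Φ xb ξ ∈ θ.crit (Φ xb) vb ∧
        (∀ w ∈ θ.crit (Φ xb) vb, ⟪η, w⟫ ≤ 0) := by
  constructor
  · rintro ⟨ξ, hξ, η, hη, heq⟩
    obtain ⟨hcrit, hperp, hdual⟩ := (θ.mem_Dsub_iff hvb.2).1 hη
    exact ⟨ξ, η, hξ, heq, hperp, hcrit, hdual⟩
  · rintro ⟨ξ, η, hξ, heq, hperp, hcrit, hdual⟩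
    exact ⟨ξ, hξ, η, (θ.mem_Dsub_iff hvb.2).2 ⟨hcrit, hperp, hdual⟩, heq⟩

/-- primal-dual characterization of critical multipliers via the critical cone. -/
theorem stmt2 {n m : ℕ} (θ : CPWL m) (f : Ev n → Ev n) (Φ : Ev n → Ev m)
    (xb : Ev n) (vb : Ev m)
    (hf : DifferentiableAt ℝ f xb) (hPhi : DifferentiableAt ℝ Φ xb)
    (hPhi2 : DifferentiableAt ℝ (fderiv ℝ Φ) xb)
    (hvb : vb ∈ Lam f Φ θ xb) :
    IsCritical f Φ θ xb vb ↔
      ∃ (ξ : Ev n) (η : Ev m), ξ ≠ 0 ∧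
        gradxPsi f Φ xb vb ξ + adjD Φ xb η = 0 ∧
        ⟪η, fderiv ℝ Φ xb ξ⟫ = 0 ∧
        fderiv ℝ Φ xb ξ ∈ θ.crit (Φ xb) vb ∧
        (∀ w ∈ θ.crit (Φ xb) vb, ⟪η, w⟫ ≤ 0) :=
  stmt2_general θ f Φ xb vb hvb
end
end

section
/- Let θ be a CPWL function with (z̄,v̄) ∈ gph ∂θ. Then the domain of the graphical derivative mapping u ↦ (D∂θ)(z̄,v̄)(u) equals the critical cone 𝒦(z̄,v̄), and the domain of the regular coderivative mapping u ↦ (D̂*∂θ)(z̄,v̄)(u) equals −𝒦(z̄,v̄); that is, dom (D∂θ)(z̄,v̄) = −dom (D̂*∂θ)(z̄,v̄) = 𝒦(z̄,v̄). -/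
open Filter Topology Set RealInnerProductSpace

noncomputable section

section AuxLemmas

variable {m : ℕ} (θ : CPWL m)

lemma CPWL.nonempty_fin : Nonempty (Fin θ.l) := ⟨⟨0, θ.hl⟩⟩

lemma CPWL.le_val_s3 (z : Ev m) (i : Fin θ.l) : ⟪θ.a i, z⟫ - θ.al i ≤ θ.val z := by
  haveI := θ.nonempty_fin
  exact le_ciSup (Finite.bddAbove_range fun j => ⟪θ.a j, z⟫ - θ.al j) i

lemma CPWL.val_le {z : Ev m} {c : ℝ} (h : ∀ i, ⟪θ.a i, z⟫ - θ.al i ≤ c) : θ.val z ≤ c := by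
  haveI := θ.nonempty_fin
  exact ciSup_le h

lemma CPWL.exists_active (z : Ev m) : ∃ i, θ.val z = ⟪θ.a i, z⟫ - θ.al i := by
  haveI := θ.nonempty_fin
  obtain ⟨i0, h⟩ := Finite.exists_max (fun i => ⟪θ.a i, z⟫ - θ.al i)
  exact ⟨i0, le_antisymm (θ.val_le h) (θ.le_val_s3 z i0)⟩

/-- The active index set as a `Finset`. -/
def CPWL.Kfin (zb : Ev m) : Finset (Fin θ.l) :=
  @Finset.filter _ (fun i => θ.val zb = ⟪θ.a i, zb⟫ - θ.al i) (Classical.decPred _) Finset.univ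

lemma CPWL.mem_Kfin {zb : Ev m} {i : Fin θ.l} :
    i ∈ θ.Kfin zb ↔ θ.val zb = ⟪θ.a i, zb⟫ - θ.al i := by
  simp [CPWL.Kfin]

lemma CPWL.Kfin_nonempty (zb : Ev m) : (θ.Kfin zb).Nonempty := by
  obtain ⟨i, hi⟩ := θ.exists_active zb
  exact ⟨i, θ.mem_Kfin.2 hi⟩

/-- The directional derivative of `val` at `zb` in direction `w`. -/
def CPWL.sdir (zb w : Ev m) : ℝ :=
  (θ.Kfin zb).sup' (θ.Kfin_nonempty zb) (fun i => ⟪θ.a i, w⟫)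

lemma inner_add_smul (x z w : Ev m) (t : ℝ) : ⟪x, z + t • w⟫ = ⟪x, z⟫ + t * ⟪x, w⟫ := by
  rw [inner_add_right, real_inner_smul_right]

lemma CPWL.eventually_val (zb w : Ev m) :
    ∀ᶠ t in 𝓝[>] (0:ℝ), θ.val (zb + t • w) = θ.val zb + t * θ.sdir zb w := by
  obtain ⟨i0, hi0mem, hi0⟩ :=
    Finset.exists_mem_eq_sup' (θ.Kfin_nonempty zb) (fun i => ⟪θ.a i, w⟫)
  have hs : θ.sdir zb w = ⟪θ.a i0, w⟫ := hi0
  have hub : ∀ᶠ t in 𝓝[>] (0:ℝ),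
      ∀ i, ⟪θ.a i, zb + t • w⟫ - θ.al i ≤ θ.val zb + t * θ.sdir zb w := by
    rw [eventually_all]
    intro i
    by_cases hi : i ∈ θ.Kfin zb
    · have hiv : θ.val zb = ⟪θ.a i, zb⟫ - θ.al i := θ.mem_Kfin.1 hi
      have hle : ⟪θ.a i, w⟫ ≤ θ.sdir zb w := Finset.le_sup' (fun j => ⟪θ.a j, w⟫) hi
      filter_upwards [self_mem_nhdsWithin] with t ht
      have ht0 : (0:ℝ) ≤ t := le_of_lt ht
      rw [inner_add_smul]
      nlinarith [mul_le_mul_of_nonneg_left hle ht0]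
    · have hne : ¬ (θ.val zb = ⟪θ.a i, zb⟫ - θ.al i) := fun h => hi (θ.mem_Kfin.2 h)
      have hlt : ⟪θ.a i, zb⟫ - θ.al i < θ.val zb :=
        (θ.le_val_s3 zb i).lt_of_ne (fun h => hne h.symm)
      have hcont : Tendsto
          (fun t : ℝ => (⟪θ.a i, zb⟫ - θ.al i + t * ⟪θ.a i, w⟫) - (θ.val zb + t * θ.sdir zb w))
          (𝓝 0) (𝓝 ((⟪θ.a i, zb⟫ - θ.al i) - θ.val zb)) := by
        have hC : Continuous fun t : ℝ =>
            (⟪θ.a i, zb⟫ - θ.al i + t * ⟪θ.a i, w⟫) - (θ.val zb + t * θ.sdir zb w) := by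
          fun_prop
        simpa using hC.tendsto 0
      have hev := hcont.eventually_lt_const
        (by linarith : (⟪θ.a i, zb⟫ - θ.al i) - θ.val zb < 0)
      filter_upwards [nhdsWithin_le_nhds hev] with t ht
      rw [inner_add_smul]
      linarith
  filter_upwards [hub, self_mem_nhdsWithin] with t ht ht0
  refine le_antisymm (θ.val_le ht) ?_
  have hiv : θ.val zb = ⟪θ.a i0, zb⟫ - θ.al i0 := θ.mem_Kfin.1 hi0mem
  have hlv := θ.le_val_s3 (zb + t • w) i0
  rw [inner_add_smul] at hlv
  rw [hs, hiv]
  linarith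

lemma CPWL.crit_iff {zb vb u : Ev m} :
    u ∈ θ.crit zb vb ↔ u ∈ tcone θ.dom zb ∧ θ.sdir zb u = ⟪vb, u⟫ := by
  have hq : ∀ᶠ t in 𝓝[>] (0:ℝ),
      θ.sdir zb u = (θ.val (zb + t • u) - θ.val zb) / t := by
    filter_upwards [θ.eventually_val zb u, self_mem_nhdsWithin] with t ht ht0
    have htne : (t:ℝ) ≠ 0 := ne_of_gt ht0
    rw [ht, show θ.val zb + t * θ.sdir zb u - θ.val zb = t * θ.sdir zb u from by ring,
      mul_div_cancel_left₀ _ htne]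
  constructor
  · rintro ⟨h1, h2⟩
    exact ⟨h1, tendsto_nhds_unique (tendsto_const_nhds.congr' hq) h2⟩
  · rintro ⟨h1, h2⟩
    refine ⟨h1, ?_⟩
    rw [← h2]
    exact tendsto_const_nhds.congr' hq

lemma CPWL.tcone_dom_active {zb w : Ev m} (hw : w ∈ tcone θ.dom zb) :
    ∀ i, ⟪θ.d i, zb⟫ = θ.be i → ⟪θ.d i, w⟫ ≤ 0 := by
  obtain ⟨z, c, hzS, hc, hz, hcw⟩ := hw
  intro i hi
  have hlim : Tendsto (fun k => ⟪θ.d i, c k • (z k - zb)⟫) atTop (𝓝 ⟪θ.d i, w⟫) :=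
    tendsto_const_nhds.inner hcw
  refine le_of_tendsto' hlim (fun k => ?_)
  have h1 : ⟪θ.d i, z k⟫ ≤ θ.be i := hzS k i
  rw [real_inner_smul_right, inner_sub_right]
  nlinarith [hc k]

lemma CPWL.eventually_mem_dom_s3 {zb w : Ev m} (hzb : zb ∈ θ.dom)
    (hw : ∀ i, ⟪θ.d i, zb⟫ = θ.be i → ⟪θ.d i, w⟫ ≤ 0) :
    ∀ᶠ t in 𝓝[>] (0:ℝ), zb + t • w ∈ θ.dom := by
  have h : ∀ᶠ t in 𝓝[>] (0:ℝ), ∀ i, ⟪θ.d i, zb + t • w⟫ ≤ θ.be i := by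
    rw [eventually_all]
    intro i
    rcases eq_or_lt_of_le (hzb i) with h | h
    · filter_upwards [self_mem_nhdsWithin] with t ht
      rw [inner_add_smul]
      have h2 := hw i h
      nlinarith [le_of_lt (show (0:ℝ) < t from ht)]
    · have hcont : Tendsto (fun t : ℝ => ⟪θ.d i, zb⟫ + t * ⟪θ.d i, w⟫) (𝓝 0)
          (𝓝 (⟪θ.d i, zb⟫)) := by
        have hC : Continuous fun t : ℝ => ⟪θ.d i, zb⟫ + t * ⟪θ.d i, w⟫ := by fun_prop
        simpa using hC.tendsto 0
      have hev := hcont.eventually_lt_const h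
      filter_upwards [nhdsWithin_le_nhds hev] with t ht
      rw [inner_add_smul]
      exact le_of_lt ht
  filter_upwards [h] with t ht
  exact ht

lemma mem_tcone_of_ray {E : Type*} [NormedAddCommGroup E] [NormedSpace ℝ E] {S : Set E}
    {p q : E} (h : ∀ᶠ t in 𝓝[>] (0:ℝ), p + t • q ∈ S) : q ∈ tcone S p := by
  obtain ⟨ε, hε, hsub⟩ := mem_nhdsGT_iff_exists_Ioo_subset.1 h
  have hε0 : (0:ℝ) < ε := hε
  set t : ℕ → ℝ := fun k => (ε / 2) * (1 / (k + 1)) with htdef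
  have htpos : ∀ k, 0 < t k := fun k => by positivity
  have htlt : ∀ k, t k < ε := by
    intro k
    have h1 : (1:ℝ) / (k + 1) ≤ 1 := by
      rw [div_le_one (by positivity)]
      linarith [Nat.cast_nonneg (α := ℝ) k]
    have h2 : t k ≤ ε / 2 := by
      calc t k = (ε / 2) * (1 / (k + 1)) := rfl
        _ ≤ (ε / 2) * 1 := by nlinarith
        _ = ε / 2 := mul_one _
    linarith
  refine ⟨fun k => p + t k • q, fun k => (t k)⁻¹,
    fun k => hsub ⟨htpos k, htlt k⟩, fun k => le_of_lt (by positivity), ?_, ?_⟩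
  · have h0 : Tendsto t atTop (𝓝 0) := by
      have := tendsto_one_div_add_atTop_nhds_zero_nat.const_mul (ε / 2)
      simpa [htdef] using this
    have := (h0.smul_const q).const_add p
    simpa using this
  · have heq : ∀ k : ℕ, q = (t k)⁻¹ • (p + t k • q - p) := by
      intro k
      rw [add_sub_cancel_left, smul_smul, inv_mul_cancel₀ (ne_of_gt (htpos k)), one_smul]
    exact Tendsto.congr heq tendsto_const_nhds

lemma CPWL.subdiff_mono {z z' v v' : Ev m} (h : v ∈ θ.subdiff z) (h' : v' ∈ θ.subdiff z') :
    0 ≤ ⟪v - v', z - z'⟫ := by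
  have h1 := h.2 z' h'.1
  have h2 := h'.2 z h.1
  have e : ⟪v - v', z - z'⟫ = -(⟪v, z' - z⟫ + ⟪v', z - z'⟫) := by
    simp only [inner_sub_left, inner_sub_right]
    ring
  rw [e]
  linarith

lemma CPWL.eventually_subdiff {zb vb u : Ev m} (hzv : vb ∈ θ.subdiff zb)
    (hu : ∀ i, ⟪θ.d i, zb⟫ = θ.be i → ⟪θ.d i, u⟫ ≤ 0) (hs : θ.sdir zb u = ⟪vb, u⟫) :
    ∀ᶠ t in 𝓝[>] (0:ℝ), vb ∈ θ.subdiff (zb + t • u) := by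
  filter_upwards [θ.eventually_mem_dom_s3 hzv.1 hu, θ.eventually_val zb u,
    self_mem_nhdsWithin] with t hdom hval ht
  refine ⟨hdom, fun z' hz' => ?_⟩
  have h1 := hzv.2 z' hz'
  have e : ⟪vb, z' - (zb + t • u)⟫ = ⟪vb, z' - zb⟫ - t * ⟪vb, u⟫ := by
    simp only [inner_sub_right, inner_add_right, real_inner_smul_right]
    ring
  rw [e, hval, ← hs]
  linarith

lemma CPWL.inner_le_sdir {zb vb u : Ev m} (hzv : vb ∈ θ.subdiff zb)
    (hu : ∀ i, ⟪θ.d i, zb⟫ = θ.be i → ⟪θ.d i, u⟫ ≤ 0) : ⟪vb, u⟫ ≤ θ.sdir zb u := by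
  obtain ⟨t, hdom, hval, ht⟩ := ((θ.eventually_mem_dom_s3 hzv.1 hu).and
    ((θ.eventually_val zb u).and self_mem_nhdsWithin)).exists
  have h1 := hzv.2 _ hdom
  have e : ⟪vb, zb + t • u - zb⟫ = t * ⟪vb, u⟫ := by
    rw [add_sub_cancel_left, real_inner_smul_right]
  rw [e, hval] at h1
  have ht0 : (0:ℝ) < t := ht
  nlinarith

lemma CPWL.a_segment_subdiff {zb vb : Ev m} (hzv : vb ∈ θ.subdiff zb) {i : Fin θ.l}
    (hi : θ.val zb = ⟪θ.a i, zb⟫ - θ.al i) {s : ℝ} (h0 : 0 ≤ s) (h1 : s ≤ 1) :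
    vb + s • (θ.a i - vb) ∈ θ.subdiff zb := by
  refine ⟨hzv.1, fun z' hz' => ?_⟩
  have hv := hzv.2 z' hz'
  have ha : ⟪θ.a i, z' - zb⟫ ≤ θ.val z' - θ.val zb := by
    have hl := θ.le_val_s3 z' i
    rw [inner_sub_right]
    linarith
  have e : ⟪vb + s • (θ.a i - vb), z' - zb⟫
      = (1 - s) * ⟪vb, z' - zb⟫ + s * ⟪θ.a i, z' - zb⟫ := by
    simp only [inner_add_left, real_inner_smul_left, inner_sub_left]
    ring
  rw [e]
  nlinarith [mul_le_mul_of_nonneg_left hv (by linarith : (0:ℝ) ≤ 1 - s),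
    mul_le_mul_of_nonneg_left ha h0]

lemma CPWL.d_ray_subdiff {zb vb : Ev m} (hzv : vb ∈ θ.subdiff zb) {j : Fin θ.p}
    (hj : ⟪θ.d j, zb⟫ = θ.be j) {s : ℝ} (h0 : 0 ≤ s) :
    vb + s • θ.d j ∈ θ.subdiff zb := by
  refine ⟨hzv.1, fun z' hz' => ?_⟩
  have hv := hzv.2 z' hz'
  have hz'' : ⟪θ.d j, z'⟫ ≤ θ.be j := hz' j
  have hd : ⟪θ.d j, z' - zb⟫ ≤ 0 := by rw [inner_sub_right]; linarith
  have e : ⟪vb + s • θ.d j, z' - zb⟫ = ⟪vb, z' - zb⟫ + s * ⟪θ.d j, z' - zb⟫ := by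
    simp only [inner_add_left, real_inner_smul_left]
  rw [e]
  nlinarith [mul_le_mul_of_nonneg_left hd h0]

lemma CPWL.tangent_pair {zb vb x : Ev m}
    (hx : ∀ᶠ t in 𝓝[>] (0:ℝ), vb + t • x ∈ θ.subdiff zb) :
    ((0 : Ev m), x) ∈ tcone θ.gph (zb, vb) := by
  apply mem_tcone_of_ray
  filter_upwards [hx] with t ht
  show ((zb, vb) + t • ((0 : Ev m), x)).2 ∈ θ.subdiff ((zb, vb) + t • ((0 : Ev m), x)).1
  simpa using ht

lemma CPWL.tangent_dir {zb vb u : Ev m}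
    (hu : ∀ᶠ t in 𝓝[>] (0:ℝ), vb ∈ θ.subdiff (zb + t • u)) :
    (u, (0 : Ev m)) ∈ tcone θ.gph (zb, vb) := by
  apply mem_tcone_of_ray
  filter_upwards [hu] with t ht
  show ((zb, vb) + t • (u, (0 : Ev m))).2 ∈ θ.subdiff ((zb, vb) + t • (u, (0 : Ev m))).1
  simpa using ht

end AuxLemmas

/-- `dom (D∂θ)(z̄,v̄) = −dom (D̂*∂θ)(z̄,v̄) = 𝒦(z̄,v̄)` for CPWL functions. -/
theorem stmt3 {m : ℕ} (θ : CPWL m) (zb vb : Ev m) (hzv : vb ∈ θ.subdiff zb) :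
    ({u : Ev m | (θ.Dsub zb vb u).Nonempty} = θ.crit zb vb) ∧
    ({u : Ev m | (θ.Dhat zb vb (-u)).Nonempty} = θ.crit zb vb) := by
  have hzb : zb ∈ θ.dom := hzv.1
  constructor
  · ext u
    simp only [Set.mem_setOf_eq]
    constructor
    · rintro ⟨w, zv, c, hmem, hc, hlim, hd⟩
      have hz1 : Tendsto (fun k => (zv k).1) atTop (𝓝 zb) := (continuous_fst.tendsto _).comp hlim
      have hv1 : Tendsto (fun k => (zv k).2) atTop (𝓝 vb) := (continuous_snd.tendsto _).comp hlim
      have hdz : Tendsto (fun k => c k • ((zv k).1 - zb)) atTop (𝓝 u) := by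
        have h := (continuous_fst.tendsto _).comp hd
        simpa [Function.comp_def, Prod.smul_fst, Prod.fst_sub] using h
      have hutc : u ∈ tcone θ.dom zb :=
        ⟨fun k => (zv k).1, c, fun k => (hmem k).1, hc, hz1, hdz⟩
      rw [θ.crit_iff]
      refine ⟨hutc, le_antisymm ?_ (θ.inner_le_sdir hzv (θ.tcone_dom_active hutc))⟩
      apply Finset.sup'_le
      intro i hi
      have hiv : θ.val zb = ⟪θ.a i, zb⟫ - θ.al i := θ.mem_Kfin.1 hi
      have key : ∀ k, ⟪θ.a i, c k • ((zv k).1 - zb)⟫ ≤ ⟪(zv k).2, c k • ((zv k).1 - zb)⟫ := by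
        intro k
        have h1 : ⟪θ.a i, (zv k).1 - zb⟫ ≤ θ.val (zv k).1 - θ.val zb := by
          have hl := θ.le_val_s3 (zv k).1 i
          rw [inner_sub_right]
          linarith
        have h2 : θ.val (zv k).1 - θ.val zb ≤ ⟪(zv k).2, (zv k).1 - zb⟫ := by
          have hsub := (hmem k).2 zb hzb
          have e : ⟪(zv k).2, zb - (zv k).1⟫ = -⟪(zv k).2, (zv k).1 - zb⟫ := by
            rw [← inner_neg_right]
            congr 1
            abel
          rw [e] at hsub
          linarith
        rw [real_inner_smul_right, real_inner_smul_right]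
        exact mul_le_mul_of_nonneg_left (le_trans h1 h2) (hc k)
      exact le_of_tendsto_of_tendsto' (tendsto_const_nhds.inner hdz) (hv1.inner hdz) key
    · intro hu
      rw [θ.crit_iff] at hu
      obtain ⟨hutc, hs⟩ := hu
      exact ⟨0, θ.tangent_dir (θ.eventually_subdiff hzv (θ.tcone_dom_active hutc) hs)⟩
  · ext u
    simp only [Set.mem_setOf_eq]
    constructor
    · rintro ⟨w, hw⟩
      rw [θ.crit_iff]
      have hK : ∀ i ∈ θ.Kfin zb, ⟪θ.a i, u⟫ ≤ ⟪vb, u⟫ := by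
        intro i hi
        have hiv : θ.val zb = ⟪θ.a i, zb⟫ - θ.al i := θ.mem_Kfin.1 hi
        have htan : ((0 : Ev m), θ.a i - vb) ∈ tcone θ.gph (zb, vb) := by
          apply θ.tangent_pair
          filter_upwards [Ioo_mem_nhdsGT_of_mem (Set.left_mem_Ico.2 one_pos)] with t ht
          exact θ.a_segment_subdiff hzv hiv (le_of_lt ht.1) (le_of_lt ht.2)
        have h := hw _ htan
        simp only [inner_zero_right, inner_neg_left, inner_sub_right] at h
        have e1 : ⟪u, θ.a i⟫ = ⟪θ.a i, u⟫ := real_inner_comm _ _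
        have e2 : ⟪u, vb⟫ = ⟪vb, u⟫ := real_inner_comm _ _
        linarith
      have hI : ∀ i, ⟪θ.d i, zb⟫ = θ.be i → ⟪θ.d i, u⟫ ≤ 0 := by
        intro j hj
        have htan : ((0 : Ev m), θ.d j) ∈ tcone θ.gph (zb, vb) := by
          apply θ.tangent_pair
          filter_upwards [self_mem_nhdsWithin] with t ht
          exact θ.d_ray_subdiff hzv hj (le_of_lt ht)
        have h := hw _ htan
        simp only [inner_zero_right, inner_neg_left] at h
        have e1 : ⟪u, θ.d j⟫ = ⟪θ.d j, u⟫ := real_inner_comm _ _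
        linarith
      have hutc : u ∈ tcone θ.dom zb := mem_tcone_of_ray (θ.eventually_mem_dom_s3 hzb hI)
      exact ⟨hutc, le_antisymm (Finset.sup'_le _ _ hK) (θ.inner_le_sdir hzv hI)⟩
    · intro hu
      rw [θ.crit_iff] at hu
      obtain ⟨hutc, hs⟩ := hu
      refine ⟨0, fun h hh => ?_⟩
      obtain ⟨t, hsubt, ht0⟩ :=
        ((θ.eventually_subdiff hzv (θ.tcone_dom_active hutc) hs).and self_mem_nhdsWithin).exists
      have ht0' : (0:ℝ) < t := ht0
      obtain ⟨zv, c, hmem, hc, hlim, hd⟩ := hh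
      have hdv : Tendsto (fun k => c k • ((zv k).2 - vb)) atTop (𝓝 h.2) := by
        have hh2 := (continuous_snd.tendsto _).comp hd
        simpa [Function.comp_def, Prod.smul_snd, Prod.snd_sub] using hh2
      have hz1 : Tendsto (fun k => (zv k).1) atTop (𝓝 zb) := (continuous_fst.tendsto _).comp hlim
      have hdz0 : Tendsto (fun k => (zv k).1 - zb) atTop (𝓝 0) := by
        have := hz1.sub (tendsto_const_nhds (x := zb))
        simpa using this
      have key : ∀ k, t * ⟪c k • ((zv k).2 - vb), u⟫ ≤ ⟪c k • ((zv k).2 - vb), (zv k).1 - zb⟫ := by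
        intro k
        have hmono := θ.subdiff_mono (hmem k) hsubt
        have e : ⟪(zv k).2 - vb, (zv k).1 - (zb + t • u)⟫
            = ⟪(zv k).2 - vb, (zv k).1 - zb⟫ - t * ⟪(zv k).2 - vb, u⟫ := by
          have e2 : (zv k).1 - (zb + t • u) = ((zv k).1 - zb) - t • u := by abel
          rw [e2, inner_sub_right, real_inner_smul_right]
        rw [e] at hmono
        rw [real_inner_smul_left, real_inner_smul_left]
        nlinarith [hc k]
      have hlhs : Tendsto (fun k => t * ⟪c k • ((zv k).2 - vb), u⟫) atTop (𝓝 (t * ⟪h.2, u⟫)) :=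
        (hdv.inner tendsto_const_nhds).const_mul t
      have hrhs : Tendsto (fun k => ⟪c k • ((zv k).2 - vb), (zv k).1 - zb⟫) atTop (𝓝 0) := by
        have h0 : Tendsto (fun k => ⟪c k • ((zv k).2 - vb), (zv k).1 - zb⟫) atTop
            (𝓝 (⟪h.2, (0 : Ev m)⟫)) := hdv.inner hdz0
        simpa using h0
      have hle : t * ⟪h.2, u⟫ ≤ 0 := le_of_tendsto_of_tendsto' hlhs hrhs key
      have hfin : ⟪h.2, u⟫ ≤ 0 := by nlinarith
      have e1 : ⟪u, h.2⟫ = ⟪h.2, u⟫ := real_inner_comm _ _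
      simp only [inner_zero_left, inner_neg_left, zero_sub, neg_neg]
      linarith
end
end
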